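/- arXiv:2008.13494 — 3 statements merged into one kernel-verified Lean document; each statement's English description precedes it below -/
import Mathlib

section
/- Let X be a coalgebra over a field k with comultiplication Δ and counit ε, and let α : X ⊗ X → X and β : X ⊗ X^cop → X be linear maps, writing x^y := α(x ⊗ y) and x·y := β(x ⊗ y). Suppose (x·y_(1))^(y_(2)) = x^(y_(1))·y_(2) = ε(y)x for all x,y ∈ X. Then α is a coalgebra morphism if and only if β is a coalgebra morphism. -/
open TensorProduct

noncomputable section

variable (k : Type) [Field k] (X : Type) [AddCommGroup X] [Module k X] [Coalgebra k X]

/-- x ⊗ y ↦ ε(y) x -/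
def cE : X ⊗[k] X →ₗ[k] X :=
  (TensorProduct.rid k X).toLinearMap ∘ₗ LinearMap.lTensor X (Coalgebra.counit (R := k))

/-- x ⊗ y ↦ ε(x) y -/
def cE' : X ⊗[k] X →ₗ[k] X :=
  (TensorProduct.lid k X).toLinearMap ∘ₗ LinearMap.rTensor X (Coalgebra.counit (R := k))

/-- first Sweedler component of a morphism `X⊗X → X⊗X` -/
def comp1 (s : X ⊗[k] X →ₗ[k] X ⊗[k] X) : X ⊗[k] X →ₗ[k] X := cE k X ∘ₗ s

/-- second Sweedler component of a morphism `X⊗X → X⊗X` -/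
def comp2 (s : X ⊗[k] X →ₗ[k] X ⊗[k] X) : X ⊗[k] X →ₗ[k] X := cE' k X ∘ₗ s

/-- `Gmap f (x ⊗ y) = f (x ⊗ y₍₁₎) ⊗ y₍₂₎` -/
def Gmap (f : X ⊗[k] X →ₗ[k] X) : X ⊗[k] X →ₗ[k] X ⊗[k] X :=
  TensorProduct.map f LinearMap.id ∘ₗ (TensorProduct.assoc k X X X).symm.toLinearMap ∘ₗ
    LinearMap.lTensor X (Coalgebra.comul (R := k))

/-- comultiplication of `X^cop` -/
def comulCop : X →ₗ[k] X ⊗[k] X :=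
  (TensorProduct.comm k X X).toLinearMap ∘ₗ Coalgebra.comul (R := k)

/-- `GmapCop f (x ⊗ y) = f (x ⊗ y₍₂₎) ⊗ y₍₁₎` -/
def GmapCop (f : X ⊗[k] X →ₗ[k] X) : X ⊗[k] X →ₗ[k] X ⊗[k] X :=
  TensorProduct.map f LinearMap.id ∘ₗ (TensorProduct.assoc k X X X).symm.toLinearMap ∘ₗ
    LinearMap.lTensor X (comulCop k X)

/-- comultiplication of `X ⊗ X` -/
def comulT : X ⊗[k] X →ₗ[k] (X ⊗[k] X) ⊗[k] (X ⊗[k] X) :=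
  (TensorProduct.tensorTensorTensorComm k X X X X).toLinearMap ∘ₗ
    TensorProduct.map (Coalgebra.comul (R := k)) (Coalgebra.comul (R := k))

/-- comultiplication of `X ⊗ X^cop` -/
def comulTCop : X ⊗[k] X →ₗ[k] (X ⊗[k] X) ⊗[k] (X ⊗[k] X) :=
  (TensorProduct.tensorTensorTensorComm k X X X X).toLinearMap ∘ₗ
    TensorProduct.map (Coalgebra.comul (R := k)) (comulCop k X)

/-- comultiplication of `X^cop ⊗ X^cop` -/
def comulTcc : X ⊗[k] X →ₗ[k] (X ⊗[k] X) ⊗[k] (X ⊗[k] X) :=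
  (TensorProduct.tensorTensorTensorComm k X X X X).toLinearMap ∘ₗ
    TensorProduct.map (comulCop k X) (comulCop k X)

/-- counit of `X ⊗ X` -/
def counitT : X ⊗[k] X →ₗ[k] k :=
  (TensorProduct.lid k k).toLinearMap ∘ₗ
    TensorProduct.map (Coalgebra.counit (R := k)) (Coalgebra.counit (R := k))

/-- `s : X⊗X → X⊗X` is a coalgebra morphism -/
def IsCoalgEndo (s : X ⊗[k] X →ₗ[k] X ⊗[k] X) : Prop :=
  comulT k X ∘ₗ s = TensorProduct.map s s ∘ₗ comulT k X ∧ counitT k X ∘ₗ s = counitT k X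

/-- `f : X⊗X → X` is a coalgebra morphism -/
def IsCoalgMor (f : X ⊗[k] X →ₗ[k] X) : Prop :=
  Coalgebra.comul (R := k) ∘ₗ f = TensorProduct.map f f ∘ₗ comulT k X ∧
  Coalgebra.counit (R := k) ∘ₗ f = counitT k X

/-- `f : X ⊗ X^cop → X` is a coalgebra morphism -/
def IsCoalgMorCop (f : X ⊗[k] X →ₗ[k] X) : Prop :=
  Coalgebra.comul (R := k) ∘ₗ f = TensorProduct.map f f ∘ₗ comulTCop k X ∧
  Coalgebra.counit (R := k) ∘ₗ f = counitT k X

/-- the operation `x ⊥ y := s₁ ((y·x₍₁₎) ⊗ x₍₂₎)` -/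
def dOf (s : X ⊗[k] X →ₗ[k] X ⊗[k] X) (p : X ⊗[k] X →ₗ[k] X) : X ⊗[k] X →ₗ[k] X :=
  comp1 k X s ∘ₗ Gmap k X p ∘ₗ (TensorProduct.comm k X X).toLinearMap

/-- the operation `⊥` of the endomorphism `s` viewed on `X^cop ⊗ X^cop` -/
def dOfCop (s : X ⊗[k] X →ₗ[k] X ⊗[k] X) (p : X ⊗[k] X →ₗ[k] X) : X ⊗[k] X →ₗ[k] X :=
  comp1 k X s ∘ₗ GmapCop k X p ∘ₗ (TensorProduct.comm k X X).toLinearMap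

/-- left non-degeneracy of `s` : `G_s` is invertible -/
def LeftNonDeg (s : X ⊗[k] X →ₗ[k] X ⊗[k] X) : Prop :=
  Function.Bijective (Gmap k X (comp2 k X s))

/-- `p` is the operation `·` associated with a left non-degenerate `s`, i.e.
`(x·y₍₁₎)^(y₍₂₎) = x^(y₍₁₎)·y₍₂₎ = ε(y)x`. -/
def IsDotOf (s : X ⊗[k] X →ₗ[k] X ⊗[k] X) (p : X ⊗[k] X →ₗ[k] X) : Prop :=
  comp2 k X s ∘ₗ Gmap k X p = cE k X ∧ p ∘ₗ Gmap k X (comp2 k X s) = cE k X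

def s12m (s : X ⊗[k] X →ₗ[k] X ⊗[k] X) : (X ⊗[k] X) ⊗[k] X →ₗ[k] (X ⊗[k] X) ⊗[k] X :=
  LinearMap.rTensor X s

def s23m (s : X ⊗[k] X →ₗ[k] X ⊗[k] X) : (X ⊗[k] X) ⊗[k] X →ₗ[k] (X ⊗[k] X) ⊗[k] X :=
  (TensorProduct.assoc k X X X).symm.toLinearMap ∘ₗ LinearMap.lTensor X s ∘ₗ
    (TensorProduct.assoc k X X X).toLinearMap

/-- the braid equation -/
def IsBraidSol (s : X ⊗[k] X →ₗ[k] X ⊗[k] X) : Prop :=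
  s12m k X s ∘ₗ s23m k X s ∘ₗ s12m k X s = s23m k X s ∘ₗ s12m k X s ∘ₗ s23m k X s

/-- the exchange identity `y₍₁₎⊥x₍₂₎ ⊗ x₍₁₎·y₍₂₎ = y₍₂₎⊥x₍₁₎ ⊗ x₍₂₎·y₍₁₎` -/
def ExchangeId (p d : X ⊗[k] X →ₗ[k] X) : Prop :=
  ∀ (x y : X) (n m : ℕ) (x1 x2 : Fin n → X) (y1 y2 : Fin m → X),
    (∑ i, x1 i ⊗ₜ[k] x2 i) = Coalgebra.comul (R := k) x →
    (∑ j, y1 j ⊗ₜ[k] y2 j) = Coalgebra.comul (R := k) y →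
    (∑ i, ∑ j, d (y1 j ⊗ₜ[k] x2 i) ⊗ₜ[k] p (x1 i ⊗ₜ[k] y2 j)) =
      ∑ i, ∑ j, d (y2 j ⊗ₜ[k] x1 i) ⊗ₜ[k] p (x2 i ⊗ₜ[k] y1 j)

/-- the three q-cycle coalgebra conditions -/
def QCycleConds (p d : X ⊗[k] X →ₗ[k] X) : Prop :=
  ∀ (x y z : X) (n m : ℕ) (y1 y2 : Fin n → X) (z1 z2 : Fin m → X),
    (∑ i, y1 i ⊗ₜ[k] y2 i) = Coalgebra.comul (R := k) y →
    (∑ j, z1 j ⊗ₜ[k] z2 j) = Coalgebra.comul (R := k) z →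
    ((∑ i, p (p (x ⊗ₜ[k] y1 i) ⊗ₜ[k] d (z ⊗ₜ[k] y2 i))) =
        ∑ j, p (p (x ⊗ₜ[k] z2 j) ⊗ₜ[k] p (y ⊗ₜ[k] z1 j)) ∧
     (∑ i, d (p (x ⊗ₜ[k] y1 i) ⊗ₜ[k] p (z ⊗ₜ[k] y2 i))) =
        ∑ j, p (d (x ⊗ₜ[k] z2 j) ⊗ₜ[k] d (y ⊗ₜ[k] z1 j)) ∧
     (∑ i, d (d (x ⊗ₜ[k] y1 i) ⊗ₜ[k] d (z ⊗ₜ[k] y2 i))) =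
        ∑ j, d (d (x ⊗ₜ[k] z2 j) ⊗ₜ[k] p (y ⊗ₜ[k] z1 j)))


/-- the left action `ˣy := y₍₂₎ ⊥ x^(y₍₁₎)`, where `g` is the operation `x^y` -/
def bOf (g d : X ⊗[k] X →ₗ[k] X) : X ⊗[k] X →ₗ[k] X :=
  d ∘ₗ (TensorProduct.comm k X X).toLinearMap ∘ₗ Gmap k X g

/-- the left action `_xy := y₍₁₎ · x_(y₍₂₎)`, where `g'` is the operation `x_y` -/
def uOfCop (g' p : X ⊗[k] X →ₗ[k] X) : X ⊗[k] X →ₗ[k] X :=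
  p ∘ₗ (TensorProduct.comm k X X).toLinearMap ∘ₗ GmapCop k X g'

/-- `Hmap f (x ⊗ y) = f (y₍₂₎ ⊗ x) ⊗ y₍₁₎` -/
def Hmap (f : X ⊗[k] X →ₗ[k] X) : X ⊗[k] X →ₗ[k] X ⊗[k] X :=
  TensorProduct.map f LinearMap.id ∘ₗ (TensorProduct.assoc k X X X).symm.toLinearMap ∘ₗ
    LinearMap.lTensor X (TensorProduct.comm k X X).toLinearMap ∘ₗ
    (TensorProduct.assoc k X X X).toLinearMap ∘ₗ
    LinearMap.rTensor X (comulCop k X) ∘ₗ (TensorProduct.comm k X X).toLinearMap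

/-- `HmapCop f (x ⊗ y) = f (y₍₁₎ ⊗ x) ⊗ y₍₂₎` -/
def HmapCop (f : X ⊗[k] X →ₗ[k] X) : X ⊗[k] X →ₗ[k] X ⊗[k] X :=
  TensorProduct.map f LinearMap.id ∘ₗ (TensorProduct.assoc k X X X).symm.toLinearMap ∘ₗ
    LinearMap.lTensor X (TensorProduct.comm k X X).toLinearMap ∘ₗ
    (TensorProduct.assoc k X X X).toLinearMap ∘ₗ
    LinearMap.rTensor X (Coalgebra.comul (R := k)) ∘ₗ (TensorProduct.comm k X X).toLinearMap

/-!
The hypotheses say that `G_α : x ⊗ y ↦ α(x ⊗ y₍₁₎) ⊗ y₍₂₎` and `G_β` are mutually inverse, so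
identities of maps out of `X ⊗ X` may be checked after precomposing with `G_α` or `G_β`.
Precomposed with `G_α`, the map `Δ ∘ β` becomes `x ⊗ y ↦ ε(y) Δx`. If `α` is a coalgebra map,
`(β ⊗ β) ∘ Δ_{X ⊗ X^cop} ∘ G_α` sends `x ⊗ y` to
`β(α(x₍₁₎ ⊗ y₍₁₎) ⊗ y₍₄₎) ⊗ β(α(x₍₂₎ ⊗ y₍₂₎) ⊗ y₍₃₎)`; contracting with the hypothesis first the
inner legs `y₍₂₎ ⊗ y₍₃₎` and then the outer ones gives `ε(y) Δx` again. The converse is symmetric,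
and the counit conditions transfer along `ε ∘ f = ε_{X ⊗ X} ∘ G_f`.
-/

open Coalgebra LinearMap TensorProduct

section
variable {R C M : Type*} [CommSemiring R] [AddCommMonoid C] [Module R C] [Coalgebra R C]
  [AddCommMonoid M] [Module R M]

theorem rTensor_smulRight_counit_comp_comul (m : M) :
    (counit.smulRight m).rTensor C ∘ₗ comul (R := R) = TensorProduct.mk R M C m := by
  have : counit.smulRight m = toSpanSingleton R M m ∘ₗ (counit : C →ₗ[R] R) := by ext; simp
  ext c
  rw [this, rTensor_comp, comp_assoc, comp_apply, comp_apply, rTensor_counit_comul]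
  simp

theorem lTensor_assoc_symm_comp_assoc_comp_map_comul_comul :
    (TensorProduct.assoc R C C C).symm.toLinearMap.lTensor C ∘ₗ
      (TensorProduct.assoc R C C (C ⊗[R] C)).toLinearMap ∘ₗ map comul comul ∘ₗ comul =
    (comul.rTensor C).lTensor C ∘ₗ comul.lTensor C ∘ₗ (comul (R := R) (A := C)) := by
  simp only [coassoc_simps]

def act₂ (f g : M ⊗[R] M →ₗ[R] M) (a : M) : M ⊗[R] M →ₗ[R] M :=
  g ∘ₗ (f ∘ₗ TensorProduct.mk R M M a).rTensor M

@[simp]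
theorem act₂_tmul (f g : M ⊗[R] M →ₗ[R] M) (a p q : M) :
    act₂ f g a (p ⊗ₜ q) = g (f (a ⊗ₜ p) ⊗ₜ q) := rfl

end

section
variable {k X}

theorem cE_tmul (x y : X) : cE k X (x ⊗ₜ y) = counit (R := k) y • x := by
  simp [cE]

theorem Gmap_tmul (f : X ⊗[k] X →ₗ[k] X) (x y : X) :
    Gmap k X f (x ⊗ₜ y) = (f ∘ₗ TensorProduct.mk k X X x).rTensor X (comul y) := by
  rw [Gmap, comp_apply, comp_apply, lTensor_tmul]
  induction comul (R := k) y using TensorProduct.induction_on with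
  | zero => simp
  | tmul p q => simp
  | add u v hu hv => simp_all [tmul_add]

theorem act₂_comp_comul {f g : X ⊗[k] X →ₗ[k] X} (h : g ∘ₗ Gmap k X f = cE k X) (a : X) :
    act₂ f g a ∘ₗ comul = counit.smulRight a := by
  ext y
  rw [comp_apply, act₂, comp_apply, ← Gmap_tmul, ← comp_apply (f := g), h, cE_tmul]
  rfl

theorem Gmap_comp_Gmap {f g : X ⊗[k] X →ₗ[k] X} (h : g ∘ₗ Gmap k X f = cE k X) :
    Gmap k X g ∘ₗ Gmap k X f = LinearMap.id := by
  refine TensorProduct.ext' fun x y => ?_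
  have hcoassoc : Gmap k X g ∘ₗ (f ∘ₗ TensorProduct.mk k X X x).rTensor X ∘ₗ comul =
      (act₂ f g x ∘ₗ comul).rTensor X ∘ₗ comul := by
    simp only [Gmap, act₂, coassoc_simps]
  rw [comp_apply, Gmap_tmul, ← comp_apply (g := comul), ← comp_apply (f := Gmap k X g), hcoassoc,
    act₂_comp_comul h, rTensor_smulRight_counit_comp_comul]
  rfl

theorem counitT_comp_Gmap (f : X ⊗[k] X →ₗ[k] X) :
    counitT k X ∘ₗ Gmap k X f = counit ∘ₗ f := by
  refine TensorProduct.ext' fun x y => ?_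
  have hsplit : counitT k X ∘ₗ (f ∘ₗ TensorProduct.mk k X X x).rTensor X =
      (TensorProduct.lid k k).toLinearMap ∘ₗ (counit ∘ₗ f ∘ₗ TensorProduct.mk k X X x).rTensor k ∘ₗ
        counit.lTensor X := by
    ext; simp [counitT]
  rw [comp_apply, Gmap_tmul, ← comp_apply (f := counitT k X), hsplit, comp_apply, comp_apply,
    lTensor_counit_comul]
  simp

theorem counit_comp_cE : counit ∘ₗ cE k X = counitT k X := by
  refine TensorProduct.ext' fun x y => ?_
  simp [cE, counitT, mul_comm]

theorem counit_comp_eq_counitT {f g : X ⊗[k] X →ₗ[k] X} (h : f ∘ₗ Gmap k X g = cE k X)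
    (hf : counit ∘ₗ f = counitT k X) : counit ∘ₗ g = counitT k X := by
  calc counit ∘ₗ g = counitT k X ∘ₗ Gmap k X g := (counitT_comp_Gmap g).symm
    _ = counit ∘ₗ f ∘ₗ Gmap k X g := by rw [← hf, comp_assoc]
    _ = counitT k X := by rw [h, counit_comp_cE]

theorem comulTCop_eq : comulTCop k X = (tensorTensorTensorComm k X X X X).toLinearMap ∘ₗ
    (TensorProduct.comm k X X).toLinearMap.lTensor (X ⊗[k] X) ∘ₗ map comul comul := by
  rw [comulTCop, comulCop, ← lTensor_comp_map]

theorem map_comp_comulTCop_comp_comul {M N : Type*} [AddCommMonoid M] [Module k M]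
    [AddCommMonoid N] [Module k N] {Ka : X ⊗[k] X →ₗ[k] M} {Kb : X ⊗[k] X →ₗ[k] N} {a : M} {b : N}
    (ha : Ka ∘ₗ comul = counit.smulRight a) (hb : Kb ∘ₗ comul = counit.smulRight b) :
    map Ka Kb ∘ₗ comulTCop k X ∘ₗ comul = counit.smulRight (a ⊗ₜ b) := by
  -- `S (y ⊗ (n ⊗ y')) = Ka (y ⊗ y') ⊗ n`
  set S : X ⊗[k] (N ⊗[k] X) →ₗ[k] M ⊗[k] N := Ka.rTensor N ∘ₗ
    (TensorProduct.assoc k X X N).symm.toLinearMap ∘ₗ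
      (TensorProduct.comm k N X).toLinearMap.lTensor X
  have shuffle : map Ka Kb ∘ₗ (tensorTensorTensorComm k X X X X).toLinearMap ∘ₗ
      (TensorProduct.comm k X X).toLinearMap.lTensor (X ⊗[k] X) =
      S ∘ₗ (Kb.rTensor X).lTensor X ∘ₗ (TensorProduct.assoc k X X X).symm.toLinearMap.lTensor X ∘ₗ
        (TensorProduct.assoc k X X (X ⊗[k] X)).toLinearMap := by
    ext; simp [S]
  calc map Ka Kb ∘ₗ comulTCop k X ∘ₗ comul
      = S ∘ₗ (Kb.rTensor X).lTensor X ∘ₗ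
          ((TensorProduct.assoc k X X X).symm.toLinearMap.lTensor X ∘ₗ
            (TensorProduct.assoc k X X (X ⊗[k] X)).toLinearMap ∘ₗ map comul comul ∘ₗ comul) := by
        simp only [comulTCop_eq, ← comp_assoc, shuffle]
    _ = S ∘ₗ ((Kb ∘ₗ comul).rTensor X).lTensor X ∘ₗ comul.lTensor X ∘ₗ comul := by
        rw [lTensor_assoc_symm_comp_assoc_comp_map_comul_comul, rTensor_comp, lTensor_comp]
        rfl
    _ = S ∘ₗ (TensorProduct.mk k N X b).lTensor X ∘ₗ comul := by
        rw [hb, ← rTensor_smulRight_counit_comp_comul b, lTensor_comp]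
        rfl
    _ = (TensorProduct.mk k M N).flip b ∘ₗ Ka ∘ₗ comul := by
        rw [← comp_assoc, ← comp_assoc]
        congr 1
        ext; simp [S]
    _ = counit.smulRight (a ⊗ₜ b) := by
        rw [ha]; ext; simp [smul_tmul']

theorem map_comp_comulTCop_comp_rTensor {α β : X ⊗[k] X →ₗ[k] X}
    (hα : comul ∘ₗ α = map α α ∘ₗ comulT k X) (x : X) :
    map β β ∘ₗ comulTCop k X ∘ₗ (α ∘ₗ TensorProduct.mk k X X x).rTensor X =
      ∑ i ∈ (ℛ k x).index,
        map (act₂ α β ((ℛ k x).left i)) (act₂ α β ((ℛ k x).right i)) ∘ₗ comulTCop k X := by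
  have shuffle (a b : X) : map β β ∘ₗ (tensorTensorTensorComm k X X X X).toLinearMap ∘ₗ
      (map α α ∘ₗ (tensorTensorTensorComm k X X X X).toLinearMap ∘ₗ
        TensorProduct.mk k (X ⊗[k] X) (X ⊗[k] X) (a ⊗ₜ b)).rTensor (X ⊗[k] X) =
      map (act₂ α β a) (act₂ α β b) ∘ₗ (tensorTensorTensorComm k X X X X).toLinearMap := by
    ext; simp
  refine TensorProduct.ext' fun p q => ?_
  have hαp := LinearMap.congr_fun hα (x ⊗ₜ p)
  simp only [comp_apply, comulT, LinearEquiv.coe_coe, TensorProduct.map_tmul] at hαp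
  simp only [comulTCop, comp_apply, LinearEquiv.coe_coe, rTensor_tmul, TensorProduct.map_tmul, hαp,
    ← (ℛ k x).eq, sum_tmul, map_sum, LinearMap.sum_apply, TensorProduct.mk_apply]
  refine Finset.sum_congr rfl fun i _ => ?_
  simpa using LinearMap.congr_fun (shuffle _ _) (comul p ⊗ₜ comulCop k X q)

theorem map_comp_comulT_comp_rTensor {α β : X ⊗[k] X →ₗ[k] X}
    (hβ : comul ∘ₗ β = map β β ∘ₗ comulTCop k X) (x : X) :
    map α α ∘ₗ comulT k X ∘ₗ (β ∘ₗ TensorProduct.mk k X X x).rTensor X =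
      ∑ i ∈ (ℛ k x).index, (TensorProduct.comm k X X).toLinearMap ∘ₗ
        map (act₂ β α ((ℛ k x).right i)) (act₂ β α ((ℛ k x).left i)) ∘ₗ comulTCop k X := by
  have shuffle (a b : X) : map α α ∘ₗ (tensorTensorTensorComm k X X X X).toLinearMap ∘ₗ
      (map β β ∘ₗ (tensorTensorTensorComm k X X X X).toLinearMap ∘ₗ
        TensorProduct.mk k (X ⊗[k] X) (X ⊗[k] X) (a ⊗ₜ b)).rTensor (X ⊗[k] X) =
      (TensorProduct.comm k X X).toLinearMap ∘ₗ map (act₂ β α b) (act₂ β α a) ∘ₗ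
        (tensorTensorTensorComm k X X X X).toLinearMap ∘ₗ
        map (TensorProduct.comm k X X).toLinearMap (TensorProduct.comm k X X).toLinearMap := by
    ext; simp
  refine TensorProduct.ext' fun p q => ?_
  have hβp := LinearMap.congr_fun hβ (x ⊗ₜ p)
  simp only [comp_apply, comulTCop, LinearEquiv.coe_coe, TensorProduct.map_tmul] at hβp
  simp only [comulTCop, comulT, comp_apply, LinearEquiv.coe_coe, rTensor_tmul,
    TensorProduct.map_tmul, hβp, ← (ℛ k x).eq, sum_tmul, map_sum, LinearMap.sum_apply,
    TensorProduct.mk_apply]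
  refine Finset.sum_congr rfl fun i _ => ?_
  simpa [comulCop] using LinearMap.congr_fun (shuffle _ _) (comulCop k X p ⊗ₜ comul q)

theorem map_comp_comulTCop_comp_Gmap {α β : X ⊗[k] X →ₗ[k] X}
    (hα : comul ∘ₗ α = map α α ∘ₗ comulT k X) (h : β ∘ₗ Gmap k X α = cE k X) :
    map β β ∘ₗ comulTCop k X ∘ₗ Gmap k X α = comul ∘ₗ β ∘ₗ Gmap k X α := by
  refine TensorProduct.ext' fun x y => ?_
  calc (map β β ∘ₗ comulTCop k X ∘ₗ Gmap k X α) (x ⊗ₜ y)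
      = ∑ i ∈ (ℛ k x).index, (map (act₂ α β ((ℛ k x).left i)) (act₂ α β ((ℛ k x).right i)) ∘ₗ
          comulTCop k X ∘ₗ comul) y := by
        rw [comp_apply, comp_apply, Gmap_tmul, ← comp_apply (f := comulTCop k X),
          ← comp_apply (f := map β β), map_comp_comulTCop_comp_rTensor hα, LinearMap.sum_apply]
        rfl
    _ = counit (R := k) y • comul x := by
        simp_rw [map_comp_comulTCop_comp_comul (act₂_comp_comul h _) (act₂_comp_comul h _),
          smulRight_apply, ← Finset.smul_sum, (ℛ k x).eq]
    _ = (comul ∘ₗ β ∘ₗ Gmap k X α) (x ⊗ₜ y) := by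
        rw [comp_apply, h, cE_tmul, map_smul]

theorem map_comp_comulT_comp_Gmap {α β : X ⊗[k] X →ₗ[k] X}
    (hβ : comul ∘ₗ β = map β β ∘ₗ comulTCop k X) (h : α ∘ₗ Gmap k X β = cE k X) :
    map α α ∘ₗ comulT k X ∘ₗ Gmap k X β = comul ∘ₗ α ∘ₗ Gmap k X β := by
  refine TensorProduct.ext' fun x y => ?_
  calc (map α α ∘ₗ comulT k X ∘ₗ Gmap k X β) (x ⊗ₜ y)
      = ∑ i ∈ (ℛ k x).index, ((TensorProduct.comm k X X).toLinearMap ∘ₗ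
          map (act₂ β α ((ℛ k x).right i)) (act₂ β α ((ℛ k x).left i)) ∘ₗ
          comulTCop k X ∘ₗ comul) y := by
        rw [comp_apply, comp_apply, Gmap_tmul, ← comp_apply (f := comulT k X),
          ← comp_apply (f := map α α), map_comp_comulT_comp_rTensor hβ, LinearMap.sum_apply]
        rfl
    _ = counit (R := k) y • comul x := by
        simp_rw [map_comp_comulTCop_comp_comul (act₂_comp_comul h _) (act₂_comp_comul h _),
          comp_apply, smulRight_apply, map_smul, LinearEquiv.coe_coe, comm_tmul, ← Finset.smul_sum,
          (ℛ k x).eq]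
    _ = (comul ∘ₗ α ∘ₗ Gmap k X β) (x ⊗ₜ y) := by
        rw [comp_apply, h, cE_tmul, map_smul]

theorem isCoalgMorCop_of_isCoalgMor {α β : X ⊗[k] X →ₗ[k] X}
    (h1 : α ∘ₗ Gmap k X β = cE k X) (h2 : β ∘ₗ Gmap k X α = cE k X) (hα : IsCoalgMor k X α) :
    IsCoalgMorCop k X β := by
  have hsurj : Function.Surjective (Gmap k X α) := fun z =>
    ⟨Gmap k X β z, LinearMap.congr_fun (Gmap_comp_Gmap h1) z⟩
  refine ⟨?_, counit_comp_eq_counitT h1 hα.2⟩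
  rw [← LinearMap.cancel_right hsurj, comp_assoc, comp_assoc, map_comp_comulTCop_comp_Gmap hα.1 h2]

theorem isCoalgMor_of_isCoalgMorCop {α β : X ⊗[k] X →ₗ[k] X}
    (h1 : α ∘ₗ Gmap k X β = cE k X) (h2 : β ∘ₗ Gmap k X α = cE k X) (hβ : IsCoalgMorCop k X β) :
    IsCoalgMor k X α := by
  have hsurj : Function.Surjective (Gmap k X β) := fun z =>
    ⟨Gmap k X α z, LinearMap.congr_fun (Gmap_comp_Gmap h2) z⟩
  refine ⟨?_, counit_comp_eq_counitT h2 hβ.2⟩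
  rw [← LinearMap.cancel_right hsurj, comp_assoc, comp_assoc, map_comp_comulT_comp_Gmap hβ.1 h1]

end

/-- under the identities `(x·y₍₁₎)^(y₍₂₎) = x^(y₍₁₎)·y₍₂₎ = ε(y)x`,
`α` is a coalgebra morphism (from `X ⊗ X`) iff `β` is (from `X ⊗ X^cop`). -/
theorem stmt_0 (α β : X ⊗[k] X →ₗ[k] X)
    (h1 : α ∘ₗ Gmap k X β = cE k X) (h2 : β ∘ₗ Gmap k X α = cE k X) :
    IsCoalgMor k X α ↔ IsCoalgMorCop k X β :=
  ⟨isCoalgMorCop_of_isCoalgMor h1 h2, isCoalgMor_of_isCoalgMorCop h1 h2⟩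

end
end

section
/- Let X be a coalgebra and s an invertible left non-degenerate coalgebra endomorphism of X⊗X (a coalgebra automorphism). Then s̃^{-1} (i.e., s^{-1} regarded as an endomorphism of X^cop ⊗ X^cop) is left non-degenerate, and the associated q-magma coalgebra of s̃^{-1} equals the opposite q-magma coalgebra 𝒳^op = (X^cop; ⊥, ·) of the q-magma coalgebra 𝒳 = (X; ·, ⊥) associated with s. -/
open TensorProduct

noncomputable section

variable (k : Type) [Field k] (X : Type) [AddCommGroup X] [Module k X] [Coalgebra k X]

/-! Both `Gmap f` and `GmapCop f` have the shape `x ⊗ y ↦ f (x ⊗ y₍₁₎) ⊗ y₍₂₎` for a coassociative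
counital comultiplication (`Δ`, resp. `Δ^cop`), so `G_f ∘ G_g = G_{f ∘ G_g}` and `G_{cE} = id`.
In particular `G_{s₂}` is invertible with inverse `G_·`. Since `s⁻¹` is again comultiplicative,
`GmapCop (s⁻¹)₂ = τ ∘ G_{s₂} ∘ s⁻¹`, whose inverse is `s ∘ G_· ∘ τ`; the `cE`-component of that
inverse is `⊥`, and the composition rule then identifies `GmapCop ⊥` with the inverse itself. -/

section GmapAlong

variable {k} {L M N P Y : Type} [AddCommGroup L] [Module k L] [AddCommGroup M] [Module k M]
  [AddCommGroup N] [Module k N] [AddCommGroup P] [Module k P] [AddCommGroup Y] [Module k Y]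

def GmapAlong (c : Y →ₗ[k] Y ⊗[k] Y) (f : M ⊗[k] Y →ₗ[k] N) : M ⊗[k] Y →ₗ[k] N ⊗[k] Y :=
  TensorProduct.map f LinearMap.id ∘ₗ (TensorProduct.assoc k M Y Y).symm.toLinearMap ∘ₗ
    LinearMap.lTensor M c

variable (c : Y →ₗ[k] Y ⊗[k] Y)

lemma GmapAlong_tmul (f : M ⊗[k] Y →ₗ[k] N) (x : M) (y : Y) :
    GmapAlong c f (x ⊗ₜ y) = (f ∘ₗ TensorProduct.mk k M Y x).rTensor Y (c y) := by
  simp only [GmapAlong, LinearMap.coe_comp, LinearEquiv.coe_coe, Function.comp_apply,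
    LinearMap.lTensor_tmul]
  induction c y using TensorProduct.induction_on with
  | zero => simp
  | tmul a b => simp
  | add v w hv hw => simp_all [TensorProduct.tmul_add]

lemma GmapAlong_comp_rTensor (f : M ⊗[k] Y →ₗ[k] N) (h : L →ₗ[k] M) :
    GmapAlong c f ∘ₗ h.rTensor Y = GmapAlong c (f ∘ₗ h.rTensor Y) := by
  refine TensorProduct.ext' fun x y => ?_
  simp only [LinearMap.comp_apply, LinearMap.rTensor_tmul, GmapAlong_tmul]
  rfl

lemma GmapAlong_comp (hc : (TensorProduct.assoc k Y Y Y).symm.toLinearMap ∘ₗ c.lTensor Y ∘ₗ c =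
      c.rTensor Y ∘ₗ c) (f : N ⊗[k] Y →ₗ[k] P) (g : M ⊗[k] Y →ₗ[k] N) :
    GmapAlong c f ∘ₗ GmapAlong c g = GmapAlong c (f ∘ₗ GmapAlong c g) := by
  refine TensorProduct.ext' fun x y => ?_
  have hg : GmapAlong c g ∘ₗ TensorProduct.mk k M Y x =
      (g ∘ₗ TensorProduct.mk k M Y x).rTensor Y ∘ₗ c :=
    LinearMap.ext (GmapAlong_tmul c g x)
  calc GmapAlong c f (GmapAlong c g (x ⊗ₜ y))
      = GmapAlong c (f ∘ₗ (g ∘ₗ TensorProduct.mk k M Y x).rTensor Y) (c y) := by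
        rw [GmapAlong_tmul, ← LinearMap.comp_apply, GmapAlong_comp_rTensor]
    _ = (f ∘ₗ (g ∘ₗ TensorProduct.mk k M Y x).rTensor Y).rTensor Y (c.rTensor Y (c y)) := by
        rw [← LinearMap.comp_apply (c.rTensor Y), ← hc]
        rfl
    _ = GmapAlong c (f ∘ₗ GmapAlong c g) (x ⊗ₜ y) := by
        rw [← LinearMap.rTensor_comp_apply, GmapAlong_tmul, LinearMap.comp_assoc,
          LinearMap.comp_assoc, hg]

end GmapAlong

section Coalgebra

variable {k X}

lemma cE_comp_comm : cE k X ∘ₗ (TensorProduct.comm k X X).toLinearMap = cE' k X := by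
  ext a b
  simp [cE, cE']

lemma cE'_comp_comm : cE' k X ∘ₗ (TensorProduct.comm k X X).toLinearMap = cE k X := by
  ext a b
  simp [cE, cE']

lemma cE_comp_comul : cE k X ∘ₗ Coalgebra.comul = LinearMap.id := by
  ext y
  simp [cE]

lemma cE'_comp_comul : cE' k X ∘ₗ Coalgebra.comul = LinearMap.id := by
  ext y
  simp [cE']

lemma cE_comp_rTensor (F : X →ₗ[k] X) : cE k X ∘ₗ F.rTensor X = F ∘ₗ cE k X := by
  ext a b
  simp [cE]

lemma rTensor_cE_comp_mk (x : X) :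
    (cE k X ∘ₗ TensorProduct.mk k X X x).rTensor X = TensorProduct.mk k X X x ∘ₗ cE' k X := by
  ext a b
  simp [cE, cE', TensorProduct.smul_tmul]

lemma GmapAlong_cE {c : X →ₗ[k] X ⊗[k] X} (hc : cE' k X ∘ₗ c = LinearMap.id) :
    GmapAlong c (cE k X) = LinearMap.id := by
  refine TensorProduct.ext' fun x y => ?_
  rw [GmapAlong_tmul, rTensor_cE_comp_mk, LinearMap.comp_apply, ← LinearMap.comp_apply (cE' k X),
    hc]
  rfl

lemma cE_comp_GmapAlong {c : X →ₗ[k] X ⊗[k] X} (hc : cE k X ∘ₗ c = LinearMap.id)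
    (f : X ⊗[k] X →ₗ[k] X) : cE k X ∘ₗ GmapAlong c f = f := by
  refine TensorProduct.ext' fun x y => ?_
  rw [LinearMap.comp_apply, GmapAlong_tmul, ← LinearMap.comp_apply, cE_comp_rTensor,
    LinearMap.comp_apply, ← LinearMap.comp_apply (cE k X), hc]
  rfl

lemma comulCop_coassoc :
    (TensorProduct.assoc k X X X).symm.toLinearMap ∘ₗ (comulCop k X).lTensor X ∘ₗ comulCop k X =
      (comulCop k X).rTensor X ∘ₗ comulCop k X := by
  ext y
  simp only [comulCop, LinearMap.coe_comp, LinearEquiv.coe_coe, Function.comp_apply,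
    LinearMap.rTensor_comp_apply, LinearMap.lTensor_comm, ← Coalgebra.coassoc_symm_apply]
  rw [LinearMap.rTensor_comm]
  have reorder : (TensorProduct.assoc k X X X).symm.toLinearMap ∘ₗ
      (TensorProduct.comm k (X ⊗[k] X) X).toLinearMap ∘ₗ
      (TensorProduct.comm k X X).toLinearMap.rTensor X ∘ₗ
      (TensorProduct.assoc k X X X).symm.toLinearMap =
        (TensorProduct.comm k X X).toLinearMap.rTensor X ∘ₗ
          (TensorProduct.comm k X (X ⊗[k] X)).toLinearMap := by
    ext a b c
    simp
  exact LinearMap.congr_fun reorder _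

lemma cE_comp_comulCop : cE k X ∘ₗ comulCop k X = LinearMap.id := by
  rw [comulCop, ← LinearMap.comp_assoc, cE_comp_comm, cE'_comp_comul]

lemma cE'_comp_comulCop : cE' k X ∘ₗ comulCop k X = LinearMap.id := by
  rw [comulCop, ← LinearMap.comp_assoc, cE'_comp_comm, cE_comp_comul]

lemma Gmap_comp (f g : X ⊗[k] X →ₗ[k] X) :
    Gmap k X f ∘ₗ Gmap k X g = Gmap k X (f ∘ₗ Gmap k X g) :=
  GmapAlong_comp _ Coalgebra.coassoc_symm f g

lemma GmapCop_comp (f g : X ⊗[k] X →ₗ[k] X) :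
    GmapCop k X f ∘ₗ GmapCop k X g = GmapCop k X (f ∘ₗ GmapCop k X g) :=
  GmapAlong_comp _ comulCop_coassoc f g

lemma Gmap_cE : Gmap k X (cE k X) = LinearMap.id := GmapAlong_cE cE'_comp_comul

lemma GmapCop_cE : GmapCop k X (cE k X) = LinearMap.id := GmapAlong_cE cE'_comp_comulCop

lemma cE_comp_Gmap (f : X ⊗[k] X →ₗ[k] X) : cE k X ∘ₗ Gmap k X f = f :=
  cE_comp_GmapAlong cE_comp_comul f

lemma cE_comp_GmapCop (f : X ⊗[k] X →ₗ[k] X) : cE k X ∘ₗ GmapCop k X f = f :=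
  cE_comp_GmapAlong cE_comp_comulCop f

lemma Gmap_eq_map_comp_comulT (f : X ⊗[k] X →ₗ[k] X) :
    Gmap k X f = TensorProduct.map f (cE' k X) ∘ₗ comulT k X := by
  have reorder : TensorProduct.map f (cE' k X) ∘ₗ
      (TensorProduct.tensorTensorTensorComm k X X X X).toLinearMap =
        f.rTensor X ∘ₗ (TensorProduct.assoc k X X X).symm.toLinearMap ∘ₗ
          (cE k X).rTensor (X ⊗[k] X) := by
    ext a b c d
    simp [cE, cE', TensorProduct.smul_tmul]
  calc Gmap k X f
      = (f.rTensor X ∘ₗ (TensorProduct.assoc k X X X).symm.toLinearMap ∘ₗ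
          (cE k X).rTensor (X ⊗[k] X)) ∘ₗ
          TensorProduct.map Coalgebra.comul Coalgebra.comul := by
        rw [LinearMap.comp_assoc, LinearMap.comp_assoc, LinearMap.rTensor_comp_map, cE_comp_comul]
        rfl
    _ = TensorProduct.map f (cE' k X) ∘ₗ comulT k X := by
        rw [← reorder, comulT, LinearMap.comp_assoc]

lemma GmapCop_eq_comm_comp_map_comp_comulT (f : X ⊗[k] X →ₗ[k] X) :
    GmapCop k X f = (TensorProduct.comm k X X).toLinearMap ∘ₗ
      TensorProduct.map (cE' k X) f ∘ₗ comulT k X := by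
  have reorder : (TensorProduct.comm k X X).toLinearMap ∘ₗ TensorProduct.map (cE' k X) f ∘ₗ
      (TensorProduct.tensorTensorTensorComm k X X X X).toLinearMap =
        f.rTensor X ∘ₗ (TensorProduct.assoc k X X X).symm.toLinearMap ∘ₗ
          TensorProduct.map (cE' k X) (TensorProduct.comm k X X).toLinearMap := by
    ext a b c d
    simp [cE', TensorProduct.smul_tmul]
  calc GmapCop k X f
      = (f.rTensor X ∘ₗ (TensorProduct.assoc k X X X).symm.toLinearMap ∘ₗ
          TensorProduct.map (cE' k X) (TensorProduct.comm k X X).toLinearMap) ∘ₗ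
          TensorProduct.map Coalgebra.comul Coalgebra.comul := by
        rw [LinearMap.comp_assoc, LinearMap.comp_assoc, ← TensorProduct.map_comp, cE'_comp_comul]
        rfl
    _ = (TensorProduct.comm k X X).toLinearMap ∘ₗ
          TensorProduct.map (cE' k X) f ∘ₗ comulT k X := by
        rw [← reorder, comulT]
        simp only [LinearMap.comp_assoc]

lemma GmapCop_comp2_eq_comm_comp_Gmap_comp {s t : X ⊗[k] X →ₗ[k] X ⊗[k] X}
    (hs : comulT k X ∘ₗ s = TensorProduct.map s s ∘ₗ comulT k X)
    (hst : s ∘ₗ t = LinearMap.id) (hts : t ∘ₗ s = LinearMap.id) :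
    GmapCop k X (comp2 k X t) =
      (TensorProduct.comm k X X).toLinearMap ∘ₗ Gmap k X (comp2 k X s) ∘ₗ t := by
  have ht : comulT k X ∘ₗ t = TensorProduct.map t t ∘ₗ comulT k X := by
    calc comulT k X ∘ₗ t
        = TensorProduct.map t t ∘ₗ TensorProduct.map s s ∘ₗ comulT k X ∘ₗ t := by
          rw [← LinearMap.comp_assoc, ← TensorProduct.map_comp, hts, TensorProduct.map_id,
            LinearMap.id_comp]
      _ = TensorProduct.map t t ∘ₗ comulT k X := by
          rw [← LinearMap.comp_assoc _ (comulT k X), ← hs, LinearMap.comp_assoc, hst,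
            LinearMap.comp_id]
  have hs2 : comp2 k X s ∘ₗ t = cE' k X := by
    rw [comp2, LinearMap.comp_assoc, hst, LinearMap.comp_id]
  rw [GmapCop_eq_comm_comp_map_comp_comulT, Gmap_eq_map_comp_comulT,
    LinearMap.comp_assoc _ (comulT k X), ht,
    ← LinearMap.comp_assoc (comulT k X) (TensorProduct.map t t), ← TensorProduct.map_comp, hs2]
  rfl

end Coalgebra

theorem stmt_5 (s sinv : X ⊗[k] X →ₗ[k] X ⊗[k] X) (hs : IsCoalgEndo k X s)
    (hinv1 : s ∘ₗ sinv = LinearMap.id) (hinv2 : sinv ∘ₗ s = LinearMap.id)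
    (p : X ⊗[k] X →ₗ[k] X) (hp : IsDotOf k X s p) :
    Function.Bijective (GmapCop k X (comp2 k X sinv)) ∧
      (comp2 k X sinv ∘ₗ GmapCop k X (dOf k X s p) = cE k X ∧
        dOf k X s p ∘ₗ GmapCop k X (comp2 k X sinv) = cE k X) ∧
      dOfCop k X sinv (dOf k X s p) = p := by
  let G : (X ⊗[k] X) ≃ₗ[k] (X ⊗[k] X) := .ofLinearMap (Gmap k X (comp2 k X s)) (Gmap k X p)
    (by rw [Gmap_comp, hp.1, Gmap_cE]) (by rw [Gmap_comp, hp.2, Gmap_cE])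
  let E : (X ⊗[k] X) ≃ₗ[k] (X ⊗[k] X) :=
    (LinearEquiv.ofLinearMap sinv s hinv2 hinv1 : (X ⊗[k] X) ≃ₗ[k] (X ⊗[k] X)).trans
      (G.trans (TensorProduct.comm k X X))
  have hE : GmapCop k X (comp2 k X sinv) = E :=
    GmapCop_comp2_eq_comm_comp_Gmap_comp hs.1 hinv1 hinv2
  have hd : dOf k X s p = cE k X ∘ₗ E.symm := rfl
  have hdE : dOf k X s p ∘ₗ GmapCop k X (comp2 k X sinv) = cE k X := by
    rw [hE, hd, LinearMap.comp_assoc, E.symm_comp, LinearMap.comp_id]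
  have hGd : GmapCop k X (dOf k X s p) = E.symm := by
    calc GmapCop k X (dOf k X s p)
        = GmapCop k X (dOf k X s p) ∘ₗ GmapCop k X (comp2 k X sinv) ∘ₗ E.symm := by
          rw [hE, E.comp_symm, LinearMap.comp_id]
      _ = E.symm := by
          rw [← LinearMap.comp_assoc, GmapCop_comp, hdE, GmapCop_cE, LinearMap.id_comp]
  refine ⟨hE ▸ E.bijective, ⟨?_, hdE⟩, ?_⟩
  · rw [← cE_comp_GmapCop (comp2 k X sinv), LinearMap.comp_assoc, hGd, hE, E.comp_symm,
      LinearMap.comp_id]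
  · calc dOfCop k X sinv (dOf k X s p)
        = cE k X ∘ₗ (sinv ∘ₗ s) ∘ₗ Gmap k X p ∘ₗ (TensorProduct.comm k X X).toLinearMap ∘ₗ
            (TensorProduct.comm k X X).toLinearMap := by
          rw [dOfCop, hGd]
          rfl
      _ = p := by
          rw [hinv2, LinearMap.id_comp, ← LinearEquiv.coe_trans, TensorProduct.comm_trans_comm]
          exact cE_comp_Gmap p

end
end

section
/- Let ℋ = (H; ·, ⊥) be a Hopf q-brace with bijective antipode. Then for all h,k ∈ H: k·(S(h_(1))·S^{-1}(h_(2))) = k·(S^{-1}(h_(2)) ⊥ S(h_(1))) and k⊥(S^{-1}(h_(2)) ⊥ S(h_(1))) = k⊥(S(h_(1))·S^{-1}(h_(2))). -/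
open TensorProduct

noncomputable section

variable (k : Type) [Field k] (X : Type) [AddCommGroup X] [Module k X] [Coalgebra k X]

variable (H : Type) [Ring H] [HopfAlgebra k H]

/-- `(H, ·)` is a right module over `H^op`: `h·1 = h` and `h·(ab) = (h·b)·a` -/
def RightOpModule (p : H ⊗[k] H →ₗ[k] H) : Prop :=
  (∀ h : H, p (h ⊗ₜ[k] (1 : H)) = h) ∧
  ∀ h a b : H, p (h ⊗ₜ[k] (a * b)) = p (p (h ⊗ₜ[k] b) ⊗ₜ[k] a)

/-- the Hopf q-brace distributivity laws -/
def QBraceDistrib (p d : H ⊗[k] H →ₗ[k] H) : Prop :=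
  ∀ (h kk l : H) (n m : ℕ) (l1 l2 : Fin n → H) (k1 k2 : Fin m → H),
    (∑ i, l1 i ⊗ₜ[k] l2 i) = Coalgebra.comul (R := k) l →
    (∑ j, k1 j ⊗ₜ[k] k2 j) = Coalgebra.comul (R := k) kk →
    (p ((h * kk) ⊗ₜ[k] l) =
        ∑ i, ∑ j, p (h ⊗ₜ[k] d (l1 i ⊗ₜ[k] k2 j)) * p (k1 j ⊗ₜ[k] l2 i)) ∧
    (d ((h * kk) ⊗ₜ[k] l) =
        ∑ i, ∑ j, d (h ⊗ₜ[k] p (l1 i ⊗ₜ[k] k2 j)) * d (k1 j ⊗ₜ[k] l2 i))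

/-- A Hopf q-brace: a regular q-cycle coalgebra on a Hopf algebra with
right `H^op`-module structures and the distributivity laws -/
def IsHopfQBrace (p d : H ⊗[k] H →ₗ[k] H) : Prop :=
  IsCoalgMorCop k H p ∧ IsCoalgMorCop k H d ∧ ExchangeId k H p d ∧
  Function.Bijective (Gmap k H p) ∧ Function.Bijective (GmapCop k H d) ∧
  QCycleConds k H p d ∧ RightOpModule k H p ∧ RightOpModule k H d ∧ QBraceDistrib k H p d

/-- the Hopf skew-brace condition `(k⊥h₍₂₎)h₍₁₎ = (h·k₍₁₎)k₍₂₎` -/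
def SkewCond (p d : H ⊗[k] H →ₗ[k] H) : Prop :=
  ∀ (h kk : H) (n m : ℕ) (h1 h2 : Fin n → H) (k1 k2 : Fin m → H),
    (∑ i, h1 i ⊗ₜ[k] h2 i) = Coalgebra.comul (R := k) h →
    (∑ j, k1 j ⊗ₜ[k] k2 j) = Coalgebra.comul (R := k) kk →
    (∑ i, d (kk ⊗ₜ[k] h2 i) * h1 i) = ∑ j, p (h ⊗ₜ[k] k1 j) * k2 j

def IsHopfSkewBrace (p d : H ⊗[k] H →ₗ[k] H) : Prop :=
  IsHopfQBrace k H p d ∧ SkewCond k H p d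

/-- weak braiding operator conditions -/
def IsWeakBraidingOp (s : H ⊗[k] H →ₗ[k] H ⊗[k] H) : Prop :=
  (s ∘ₗ LinearMap.rTensor H (LinearMap.mul' k H) =
    LinearMap.lTensor H (LinearMap.mul' k H) ∘ₗ (TensorProduct.assoc k H H H).toLinearMap ∘ₗ
      LinearMap.rTensor H s ∘ₗ (TensorProduct.assoc k H H H).symm.toLinearMap ∘ₗ
      LinearMap.lTensor H s ∘ₗ (TensorProduct.assoc k H H H).toLinearMap) ∧
  (s ∘ₗ LinearMap.lTensor H (LinearMap.mul' k H) =
    LinearMap.rTensor H (LinearMap.mul' k H) ∘ₗ (TensorProduct.assoc k H H H).symm.toLinearMap ∘ₗ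
      LinearMap.lTensor H s ∘ₗ (TensorProduct.assoc k H H H).toLinearMap ∘ₗ
      LinearMap.rTensor H s ∘ₗ (TensorProduct.assoc k H H H).symm.toLinearMap) ∧
  (∀ h : H, s ((1 : H) ⊗ₜ[k] h) = h ⊗ₜ[k] (1 : H)) ∧
  (∀ h : H, s (h ⊗ₜ[k] (1 : H)) = (1 : H) ⊗ₜ[k] h)

/-- `(H, H, α, β)` is a matched pair of bialgebras -/
def IsMatchedPairSelf (α β : H ⊗[k] H →ₗ[k] H) : Prop :=
  ((∀ l : H, α (l ⊗ₜ[k] (1 : H)) = l) ∧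
   (∀ l a b : H, α (l ⊗ₜ[k] (a * b)) = α (α (l ⊗ₜ[k] a) ⊗ₜ[k] b))) ∧
  IsCoalgMor k H α ∧
  ((∀ h : H, β ((1 : H) ⊗ₜ[k] h) = h) ∧
   (∀ a b h : H, β ((a * b) ⊗ₜ[k] h) = β (a ⊗ₜ[k] β (b ⊗ₜ[k] h)))) ∧
  IsCoalgMor k H β ∧
  (∀ (l h h' : H) (n m : ℕ) (l1 l2 : Fin n → H) (h1 h2 : Fin m → H),
     (∑ i, l1 i ⊗ₜ[k] l2 i) = Coalgebra.comul (R := k) l →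
     (∑ j, h1 j ⊗ₜ[k] h2 j) = Coalgebra.comul (R := k) h →
     β (l ⊗ₜ[k] (h * h')) =
       ∑ i, ∑ j, β (l1 i ⊗ₜ[k] h1 j) * β (α (l2 i ⊗ₜ[k] h2 j) ⊗ₜ[k] h')) ∧
  (∀ (l' l h : H) (n m : ℕ) (l1 l2 : Fin n → H) (h1 h2 : Fin m → H),
     (∑ i, l1 i ⊗ₜ[k] l2 i) = Coalgebra.comul (R := k) l →
     (∑ j, h1 j ⊗ₜ[k] h2 j) = Coalgebra.comul (R := k) h →
     α ((l' * l) ⊗ₜ[k] h) =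
       ∑ i, ∑ j, α (l' ⊗ₜ[k] β (l1 i ⊗ₜ[k] h1 j)) * α (l2 i ⊗ₜ[k] h2 j)) ∧
  (∀ h : H, α ((1 : H) ⊗ₜ[k] h) = Coalgebra.counit (R := k) h • (1 : H)) ∧
  (∀ l : H, β (l ⊗ₜ[k] (1 : H)) = Coalgebra.counit (R := k) l • (1 : H)) ∧
  (∀ (l h : H) (n m : ℕ) (l1 l2 : Fin n → H) (h1 h2 : Fin m → H),
     (∑ i, l1 i ⊗ₜ[k] l2 i) = Coalgebra.comul (R := k) l →
     (∑ j, h1 j ⊗ₜ[k] h2 j) = Coalgebra.comul (R := k) h →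
     (∑ i, ∑ j, β (l1 i ⊗ₜ[k] h1 j) ⊗ₜ[k] α (l2 i ⊗ₜ[k] h2 j)) =
       ∑ i, ∑ j, β (l2 i ⊗ₜ[k] h2 j) ⊗ₜ[k] α (l1 i ⊗ₜ[k] h1 j))

/-- the map `T_× (h) := S(h₍₁₎) · S⁻¹(h₍₂₎)` -/
def TOp (p : H ⊗[k] H →ₗ[k] H) (Sinv : H →ₗ[k] H) : H →ₗ[k] H :=
  p ∘ₗ TensorProduct.map (HopfAlgebra.antipode (R := k) (A := H)) Sinv ∘ₗ
    Coalgebra.comul (R := k)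

/-- the map `h ↦ S⁻¹(h₍₂₎) ⊥ S(h₍₁₎)` -/
def TOp' (d : H ⊗[k] H →ₗ[k] H) (Sinv : H →ₗ[k] H) : H →ₗ[k] H :=
  d ∘ₗ TensorProduct.map Sinv (HopfAlgebra.antipode (R := k) (A := H)) ∘ₗ
    comulCop k H

/-! Write `x × y = (y · x₍₁₎) x₍₂₎` and `x ⋈ y = (y ⊥ x₍₂₎) x₍₁₎`. The first and third q-cycle
conditions, rewritten with the module laws `x · (a b) = (x · b) · a`, say exactly that
`x · (y ⋈ z) = x · (z × y)` and `x ⊥ (y ⋈ z) = x ⊥ (z × y)`.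
Because `S` and `S⁻¹` are anti-coalgebra maps, the antipode identities give
`S⁻¹(h₍₂₎) ⊥ S(h₍₁₎) = (S h₍₁₎ ⋈ S⁻¹ h₍₃₎) h₍₂₎` and
`S(h₍₁₎) · S⁻¹(h₍₂₎) = (S⁻¹ h₍₃₎ × S h₍₁₎) h₍₂₎`.
Acting on `x`, the factor `h₍₂₎` moves out as `x · (w h₍₂₎) = (x · h₍₂₎) · w`, and the two sides
agree term by term. -/

open scoped Coalgebra RingTheory.LinearMap

theorem Coalgebra.Repr.sum_counit_right_smul {R A ι : Type*} [CommSemiring R] [AddCommMonoid A]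
    [Module R A] [Coalgebra R A] {a : A} (r : Repr R a ι) :
    ∑ i ∈ r.index, counit (R := R) (r.right i) • r.left i = a := by
  simpa only [map_sum, _root_.TensorProduct.rid_tmul, one_smul] using
    congrArg (_root_.TensorProduct.rid R A) (Coalgebra.sum_tmul_counit_eq r)

namespace HopfAlgebra

variable {R A : Type*} [CommSemiring R] [Semiring A] [HopfAlgebra R A] {Sinv : A →ₗ[R] A}

theorem comul_comp_antipode :
    δ ∘ₗ antipode R =
      (antipode R ⊗ₘ antipode R) ∘ₗ (TensorProduct.comm R A A).toLinearMap ∘ₗ (δ : A →ₗ[R] _) := by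
  have hS : μ ∘ₗ (antipode R ⊗ₘ LinearMap.id) ∘ₗ δ = η ∘ₗ (ε : A →ₗ[R] R) := by
    simpa [LinearMap.rTensor_def] using mul_antipode_rTensor_comul (R := R) (A := A)
  have hε (x y : A) :
      (ε ⊗ₘ LinearMap.id) (TensorProduct.assoc R A A A (δ x ⊗ₜ y)) = (1 : R) ⊗ₜ (x ⊗ₜ y) := by
    rw [← (ℛ R x).eq]
    simpa [sum_tmul, map_sum] using
      Coalgebra.sum_counit_tmul_map_eq (R := R) ((TensorProduct.mk R A A).flip y) x
  -- `(S ⊗ S) ∘ τ ∘ Δ` is a left and `Δ ∘ S` a right convolution inverse of `Δ`.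
  have hleft : WithConv.toConv
      ((antipode R ⊗ₘ antipode R) ∘ₗ (TensorProduct.comm R A A).toLinearMap ∘ₗ δ) *
      WithConv.toConv (δ : A →ₗ[R] A ⊗[R] A) = 1 := by
    apply WithConv.ext
    simp only [LinearMap.convMul_def, LinearMap.convOne_def, WithConv.ofConv_toConv]
    simp only [LinearMap.mul'_tensor, coassoc_simps]
    rw [hS, ← LinearMap.comp_id (μ ∘ₗ _), TensorProduct.map_comp]
    ext c
    simp only [LinearMap.comp_apply]
    rw [← (ℛ R c).eq]
    simp [map_sum, hε, ← tmul_sum, sum_antipode_mul_eq_algebraMap_counit,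
      Algebra.algebraMap_eq_smul_one, Algebra.TensorProduct.one_def]
  exact (congrArg WithConv.ofConv (left_inv_eq_right_inv hleft LinearMap.comul_right_inv)).symm

theorem counit_comp_of_antipode_comp (h : antipode R ∘ₗ Sinv = LinearMap.id) :
    ε ∘ₗ Sinv = (ε : A →ₗ[R] R) := by
  conv_lhs => rw [← counit_comp_antipode, LinearMap.comp_assoc, h, LinearMap.comp_id]

theorem comul_comp_of_antipode_inverse (h₁ : antipode R ∘ₗ Sinv = LinearMap.id)
    (h₂ : Sinv ∘ₗ antipode R = LinearMap.id) :
    δ ∘ₗ Sinv = (Sinv ⊗ₘ Sinv) ∘ₗ (TensorProduct.comm R A A).toLinearMap ∘ₗ (δ : A →ₗ[R] _) := by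
  have hinv : (Sinv ⊗ₘ Sinv) ∘ₗ (TensorProduct.comm R A A).toLinearMap ∘ₗ
      (antipode R ⊗ₘ antipode R) ∘ₗ (TensorProduct.comm R A A).toLinearMap = LinearMap.id := by
    ext x y
    simp [← LinearMap.comp_apply Sinv, h₂]
  calc δ ∘ₗ Sinv
      = ((Sinv ⊗ₘ Sinv) ∘ₗ (TensorProduct.comm R A A).toLinearMap ∘ₗ
          (antipode R ⊗ₘ antipode R) ∘ₗ (TensorProduct.comm R A A).toLinearMap) ∘ₗ δ ∘ₗ Sinv := by
        rw [hinv, LinearMap.id_comp]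
    _ = (Sinv ⊗ₘ Sinv) ∘ₗ (TensorProduct.comm R A A).toLinearMap ∘ₗ (δ ∘ₗ antipode R) ∘ₗ Sinv := by
        rw [comul_comp_antipode]
        simp only [LinearMap.comp_assoc]
    _ = _ := by rw [LinearMap.comp_assoc, h₁, LinearMap.comp_id]

end HopfAlgebra

namespace Coalgebra.Repr

variable {R A ι : Type*} [CommSemiring R] [Semiring A] [HopfAlgebra R A] {a : A}

def antiMap (f : A →ₗ[R] A)
    (hf : δ ∘ₗ f = (f ⊗ₘ f) ∘ₗ (_root_.TensorProduct.comm R A A).toLinearMap ∘ₗ δ)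
    (r : Repr R a ι) : Repr R (f a) ι where
  index := r.index
  left i := f (r.right i)
  right i := f (r.left i)
  eq := by
    rw [← LinearMap.comp_apply (δ : A →ₗ[R] A ⊗[R] A), hf, LinearMap.comp_apply,
      LinearMap.comp_apply, ← r.eq]
    simp [map_sum]

theorem sum_inv_antipode_mul {Sinv : A →ₗ[R] A}
    (h₁ : HopfAlgebra.antipode R ∘ₗ Sinv = LinearMap.id)
    (h₂ : Sinv ∘ₗ HopfAlgebra.antipode R = LinearMap.id) (r : Repr R a ι) :
    ∑ i ∈ r.index, Sinv (r.right i) * r.left i = counit (R := R) a • 1 := by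
  have := HopfAlgebra.sum_mul_antipode_eq_smul
    (r.antiMap Sinv (HopfAlgebra.comul_comp_of_antipode_inverse h₁ h₂))
  simpa [antiMap, ← LinearMap.comp_apply (HopfAlgebra.antipode R), h₁,
    ← LinearMap.comp_apply (counit (R := R)), HopfAlgebra.counit_comp_of_antipode_comp h₁]
    using this

end Coalgebra.Repr

section QBrace

variable {k H}

open HopfAlgebra

/-- The paper's `x × y = (y · x₍₁₎) x₍₂₎`. -/
def cross (p : H ⊗[k] H →ₗ[k] H) : H ⊗[k] H →ₗ[k] H :=
  μ ∘ₗ Gmap k H p ∘ₗ (TensorProduct.comm k H H).toLinearMap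

/-- The paper's `x ⋈ y = (y ⊥ x₍₂₎) x₍₁₎`. -/
def bowtie (d : H ⊗[k] H →ₗ[k] H) : H ⊗[k] H →ₗ[k] H :=
  μ ∘ₗ GmapCop k H d ∘ₗ (TensorProduct.comm k H H).toLinearMap

theorem cross_tmul (p : H ⊗[k] H →ₗ[k] H) {ι : Type*} {x : H} (r : Coalgebra.Repr k x ι)
    (y : H) : cross p (x ⊗ₜ y) = ∑ i ∈ r.index, p (y ⊗ₜ r.left i) * r.right i := by
  simp [cross, Gmap, ← r.eq, map_sum, tmul_sum]

theorem bowtie_tmul (d : H ⊗[k] H →ₗ[k] H) {ι : Type*} {x : H} (r : Coalgebra.Repr k x ι)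
    (y : H) : bowtie d (x ⊗ₜ y) = ∑ i ∈ r.index, d (y ⊗ₜ r.right i) * r.left i := by
  simp [bowtie, GmapCop, comulCop, ← r.eq, map_sum, tmul_sum]

theorem apply_bowtie_eq_apply_cross {p d q : H ⊗[k] H →ₗ[k] H}
    (hq : ∀ c a b : H, q (c ⊗ₜ (a * b)) = q (q (c ⊗ₜ b) ⊗ₜ a))
    (hqc : ∀ (x y z : H) (n m : ℕ) (y1 y2 : Fin n → H) (z1 z2 : Fin m → H),
      (∑ i, y1 i ⊗ₜ[k] y2 i) = δ y → (∑ j, z1 j ⊗ₜ[k] z2 j) = δ z →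
      ∑ i, q (q (x ⊗ₜ y1 i) ⊗ₜ d (z ⊗ₜ y2 i)) = ∑ j, q (q (x ⊗ₜ z2 j) ⊗ₜ p (y ⊗ₜ z1 j)))
    (x y z : H) : q (x ⊗ₜ bowtie d (y ⊗ₜ z)) = q (x ⊗ₜ cross p (z ⊗ₜ y)) := by
  obtain ⟨n, y1, y2, hy⟩ := TensorProduct.exists_sum_tmul_eq (δ y : H ⊗[k] H)
  obtain ⟨m, z1, z2, hz⟩ := TensorProduct.exists_sum_tmul_eq (δ z : H ⊗[k] H)
  rw [bowtie_tmul d ⟨_, y1, y2, hy.symm⟩, cross_tmul p ⟨_, z1, z2, hz.symm⟩]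
  simpa [tmul_sum, hq] using hqc x y z n m y1 y2 z1 z2 hy.symm hz.symm

def middleMul (f : H ⊗[k] H →ₗ[k] H) : H ⊗[k] (H ⊗[k] H) →ₗ[k] H :=
  μ ∘ₗ (f ⊗ₘ LinearMap.id) ∘ₗ (TensorProduct.assoc k H H H).symm.toLinearMap ∘ₗ
    (TensorProduct.comm k H H).toLinearMap.lTensor H

@[simp]
theorem middleMul_tmul (f : H ⊗[k] H →ₗ[k] H) (a b c : H) :
    middleMul f (a ⊗ₜ (b ⊗ₜ c)) = f (a ⊗ₜ c) * b := by
  simp [middleMul]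

/-- `sandwich f h = f (h₍₁₎ ⊗ h₍₃₎) h₍₂₎` -/
def sandwich (f : H ⊗[k] H →ₗ[k] H) : H →ₗ[k] H :=
  middleMul f ∘ₗ (δ : H →ₗ[k] H ⊗[k] H).lTensor H ∘ₗ δ

theorem apply_sandwich_congr {q f g : H ⊗[k] H →ₗ[k] H}
    (hq : ∀ c a b : H, q (c ⊗ₜ (a * b)) = q (q (c ⊗ₜ b) ⊗ₜ a))
    (hfg : ∀ x a c : H, q (x ⊗ₜ f (a ⊗ₜ c)) = q (x ⊗ₜ g (a ⊗ₜ c))) (x h : H) :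
    q (x ⊗ₜ sandwich f h) = q (x ⊗ₜ sandwich g h) := by
  have key : q ∘ₗ TensorProduct.mk k H H x ∘ₗ middleMul f =
      q ∘ₗ TensorProduct.mk k H H x ∘ₗ middleMul g := by
    ext a b c
    simp [hq, hfg]
  exact LinearMap.congr_fun key _

theorem sum_bowtie_antipode_mul (d : H ⊗[k] H →ₗ[k] H) (z : H) {ι : Type*} {a : H}
    (r : Coalgebra.Repr k a ι) :
    ∑ i ∈ r.index, bowtie d (antipode k (r.left i) ⊗ₜ z) * r.right i = d (z ⊗ₜ antipode k a) := by
  set Φ : H ⊗[k] (H ⊗[k] H) →ₗ[k] H :=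
    μ ∘ₗ ((d ∘ₗ TensorProduct.mk k H H z ∘ₗ antipode k) ⊗ₘ (μ ∘ₗ (antipode k ⊗ₘ LinearMap.id)))
  calc _ = ∑ i ∈ r.index, ∑ j ∈ (ℛ k (r.left i)).index,
        Φ ((ℛ k (r.left i)).left j ⊗ₜ ((ℛ k (r.left i)).right j ⊗ₜ r.right i)) := by
        simp [Φ, bowtie_tmul _ ((ℛ k _).antiMap _ comul_comp_antipode), Coalgebra.Repr.antiMap,
          Finset.sum_mul, mul_assoc]
    _ = ∑ i ∈ r.index, ∑ j ∈ (ℛ k (r.right i)).index,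
        Φ (r.left i ⊗ₜ ((ℛ k (r.right i)).left j ⊗ₜ (ℛ k (r.right i)).right j)) := by
        simpa only [map_sum] using congrArg Φ (Coalgebra.sum_tmul_tmul_eq r
          (fun i => ℛ k (r.left i)) (fun i => ℛ k (r.right i)))
    _ = ∑ i ∈ r.index,
        Coalgebra.counit (R := k) (r.right i) • d (z ⊗ₜ antipode k (r.left i)) := by
        simp [Φ, ← Finset.mul_sum, sum_antipode_mul_eq_smul]
    _ = d (z ⊗ₜ antipode k a) := by
        conv_rhs => rw [← r.sum_counit_right_smul]
        simp [map_sum, tmul_sum]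

theorem sum_cross_inv_antipode_mul (p : H ⊗[k] H →ₗ[k] H) (y : H) {Sinv : H →ₗ[k] H}
    (h₁ : antipode k ∘ₗ Sinv = LinearMap.id) (h₂ : Sinv ∘ₗ antipode k = LinearMap.id)
    {ι : Type*} {b : H} (r : Coalgebra.Repr k b ι) :
    ∑ i ∈ r.index, cross p (Sinv (r.right i) ⊗ₜ y) * r.left i = p (y ⊗ₜ Sinv b) := by
  -- `Ψ (u ⊗ v ⊗ w) = p (y ⊗ S⁻¹ w) * (S⁻¹ v * u)`
  set Ψ : H ⊗[k] (H ⊗[k] H) →ₗ[k] H :=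
    μ ∘ₗ ((p ∘ₗ TensorProduct.mk k H H y ∘ₗ Sinv) ⊗ₘ (μ ∘ₗ (Sinv ⊗ₘ LinearMap.id))) ∘ₗ
      (TensorProduct.assoc k H H H).toLinearMap ∘ₗ
      (TensorProduct.comm k H H).toLinearMap.rTensor H ∘ₗ
      (TensorProduct.comm k H (H ⊗[k] H)).toLinearMap
  calc _ = ∑ i ∈ r.index, ∑ j ∈ (ℛ k (r.right i)).index,
        Ψ (r.left i ⊗ₜ ((ℛ k (r.right i)).left j ⊗ₜ (ℛ k (r.right i)).right j)) := by
        simp [Ψ, cross_tmul _ ((ℛ k _).antiMap _ (comul_comp_of_antipode_inverse h₁ h₂)),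
          Coalgebra.Repr.antiMap, Finset.sum_mul, mul_assoc]
    _ = ∑ i ∈ r.index, ∑ j ∈ (ℛ k (r.left i)).index,
        Ψ ((ℛ k (r.left i)).left j ⊗ₜ ((ℛ k (r.left i)).right j ⊗ₜ r.right i)) := by
        simpa only [map_sum] using (congrArg Ψ (Coalgebra.sum_tmul_tmul_eq r
          (fun i => ℛ k (r.left i)) (fun i => ℛ k (r.right i)))).symm
    _ = ∑ i ∈ r.index, Coalgebra.counit (R := k) (r.left i) • p (y ⊗ₜ Sinv (r.right i)) := by
        simp [Ψ, ← Finset.mul_sum, (ℛ k _).sum_inv_antipode_mul h₁ h₂]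
    _ = p (y ⊗ₜ Sinv b) := by
        conv_rhs => rw [← Coalgebra.sum_counit_smul r]
        simp [map_sum, tmul_sum]

theorem sandwich_bowtie_antipode (d : H ⊗[k] H →ₗ[k] H) (Sinv : H →ₗ[k] H) :
    sandwich (bowtie d ∘ₗ (antipode k ⊗ₘ Sinv)) = TOp' k H d Sinv := by
  have key : middleMul (bowtie d ∘ₗ (antipode k ⊗ₘ Sinv)) ∘ₗ
      (TensorProduct.assoc k H H H).toLinearMap ∘ₗ (δ : H →ₗ[k] H ⊗[k] H).rTensor H =
      d ∘ₗ (Sinv ⊗ₘ antipode k) ∘ₗ (TensorProduct.comm k H H).toLinearMap := by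
    ext a c
    simpa [← (ℛ k a).eq, map_sum, sum_tmul] using sum_bowtie_antipode_mul d (Sinv c) (ℛ k a)
  rw [sandwich, ← Coalgebra.coassoc]
  simp only [← LinearMap.comp_assoc] at key ⊢
  rw [key]
  simp only [TOp', comulCop, LinearMap.comp_assoc]

theorem sandwich_cross_inv_antipode (p : H ⊗[k] H →ₗ[k] H) {Sinv : H →ₗ[k] H}
    (h₁ : antipode k ∘ₗ Sinv = LinearMap.id) (h₂ : Sinv ∘ₗ antipode k = LinearMap.id) :
    sandwich (cross p ∘ₗ (Sinv ⊗ₘ antipode k) ∘ₗ (TensorProduct.comm k H H).toLinearMap) =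
      TOp k H p Sinv := by
  have key : middleMul (cross p ∘ₗ (Sinv ⊗ₘ antipode k) ∘ₗ
      (TensorProduct.comm k H H).toLinearMap) ∘ₗ (δ : H →ₗ[k] H ⊗[k] H).lTensor H =
      p ∘ₗ (antipode k ⊗ₘ Sinv) := by
    ext a c
    simpa [← (ℛ k c).eq, map_sum, tmul_sum] using
      sum_cross_inv_antipode_mul p (antipode k a) h₁ h₂ (ℛ k c)
  rw [sandwich, ← LinearMap.comp_assoc, key]
  rfl

end QBrace

/-- `k·(S(h₍₁₎)·S⁻¹(h₍₂₎)) = k·(S⁻¹(h₍₂₎)⊥S(h₍₁₎))` and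
`k⊥(S⁻¹(h₍₂₎)⊥S(h₍₁₎)) = k⊥(S(h₍₁₎)·S⁻¹(h₍₂₎))`. -/
theorem stmt_15 (p d : H ⊗[k] H →ₗ[k] H) (hpd : IsHopfQBrace k H p d)
    (Sinv : H →ₗ[k] H)
    (hS1 : HopfAlgebra.antipode (R := k) (A := H) ∘ₗ Sinv = LinearMap.id)
    (hS2 : Sinv ∘ₗ HopfAlgebra.antipode (R := k) (A := H) = LinearMap.id) :
    ∀ h kk : H,
      p (kk ⊗ₜ[k] TOp k H p Sinv h) = p (kk ⊗ₜ[k] TOp' k H d Sinv h) ∧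
      d (kk ⊗ₜ[k] TOp' k H d Sinv h) = d (kk ⊗ₜ[k] TOp k H p Sinv h) := by
  obtain ⟨-, -, -, -, -, hqc, ⟨-, hp⟩, ⟨-, hd⟩, -⟩ := hpd
  have hp_swap := apply_bowtie_eq_apply_cross hp
    fun x y z n m y₁ y₂ z₁ z₂ hy hz => (hqc x y z n m y₁ y₂ z₁ z₂ hy hz).1
  have hd_swap := apply_bowtie_eq_apply_cross hd
    fun x y z n m y₁ y₂ z₁ z₂ hy hz => (hqc x y z n m y₁ y₂ z₁ z₂ hy hz).2.2
  intro h kk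
  rw [← sandwich_bowtie_antipode, ← sandwich_cross_inv_antipode p hS1 hS2]
  exact ⟨(apply_sandwich_congr hp (fun x _ _ => hp_swap x _ _) kk h).symm,
    apply_sandwich_congr hd (fun x _ _ => hd_swap x _ _) kk h⟩
end
end
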